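/- arXiv:2006.09321 — 4 statements merged into one kernel-verified Lean document; each statement's English description precedes it below -/
import Mathlib

section
/- The pseudoreachability order coincides with the bubble-sorting order on S_n: for all permutations x, y of [n], x ≥_P y if and only if λ_k(x) ≥ λ_k(y) for every k ∈ [n−1]. -/
/-- `o` is the outcome of running parking Algorithm A on preference vector `a`:
car `i` parks in the first unoccupied spot in `[a i, n]`, and every car parks. -/
def IsAOutcome {n : ℕ} (a o : Fin n → Fin n) : Prop :=
  Function.Injective o ∧ ∀ i, a i ≤ o i ∧
    ∀ s, a i ≤ s → s < o i → ∃ j, j < i ∧ o j = s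

/-- `a` is a parking function. -/
def IsParkingFunction {n : ℕ} (a : Fin n → Fin n) : Prop :=
  ∃ o, IsAOutcome a o

/-- `o` is the outcome of running parking Algorithm B on the pair `(a, b)`:
car `i` parks in the first unoccupied spot in `[a i, b i]`, and every car parks. -/
def IsBOutcome {n : ℕ} (a b o : Fin n → Fin n) : Prop :=
  Function.Injective o ∧ ∀ i, a i ≤ o i ∧ o i ≤ b i ∧
    ∀ s, a i ≤ s → s < o i → ∃ j, j < i ∧ o j = s

/-- `(a, b)` is an interval parking function. -/
def IsIPF {n : ℕ} (a b : Fin n → Fin n) : Prop :=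
  ∃ o, IsBOutcome a b o

/-- The conjugate (reverse complement) `x*` of `x`, with `x*(i) = n + 1 - x(n + 1 - i)`. -/
def pconj {n : ℕ} (f : Fin n → Fin n) : Fin n → Fin n :=
  fun i => (f i.rev).rev

/-- The pair `(x, y)` is reachable, `x ⊵_R y`: there is an IPF `(a, b)` with
`O(a) = x` and `O(b*) = y*`. -/
def Reaches {n : ℕ} (x y : Fin n → Fin n) : Prop :=
  ∃ a b : Fin n → Fin n, IsIPF a b ∧ IsAOutcome a x ∧ IsAOutcome (pconj b) (pconj y)

/-- Pseudoreachability `x ≥_P y`: the reflexive-transitive closure of reachability. -/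
def PseudoGE {n : ℕ} (x y : Equiv.Perm (Fin n)) : Prop :=
  Relation.ReflTransGen (fun u v : Equiv.Perm (Fin n) => Reaches ⇑u ⇑v) x y

/-- `#{k ∈ [i] : x(k) ≥ j}` (with `i`, `j` zero-indexed). -/
def bcount {n : ℕ} (x : Fin n → Fin n) (i j : Fin n) : ℕ :=
  (Finset.univ.filter (fun k : Fin n => k ≤ i ∧ j ≤ x k)).card

/-- The Bruhat order `x ≥_B y` on the symmetric group. -/
def BruhatGE {n : ℕ} (x y : Equiv.Perm (Fin n)) : Prop :=
  ∀ i j : Fin n, bcount ⇑y i j ≤ bcount ⇑x i j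

/-- The number of inversions (the Coxeter length) of `f`. -/
def invCount {n : ℕ} (f : Fin n → Fin n) : ℕ :=
  (Finset.univ.filter (fun p : Fin n × Fin n => p.1 < p.2 ∧ f p.2 < f p.1)).card

/-- The adjacent transposition `s_i` exchanging `i` and `i+1` (one-indexed),
as a permutation of `Fin n`. -/
def sgen (n : ℕ) (i : ℕ) : Equiv.Perm (Fin n) :=
  if h : 1 ≤ i ∧ i < n then Equiv.swap ⟨i - 1, by omega⟩ ⟨i, h.2⟩ else 1

/-- Left weak order: `x ≥_W y` iff `x = s_{i₁} ⋯ s_{i_k} · y` with `ℓ(x) = ℓ(y) + k`. -/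
def WeakGE {n : ℕ} (x y : Equiv.Perm (Fin n)) : Prop :=
  ∃ l : List ℕ, (∀ i ∈ l, 1 ≤ i ∧ i ≤ n - 1) ∧
    x = (l.map (sgen n)).prod * y ∧ invCount ⇑x = invCount ⇑y + l.length

/-- The projection `x ↦ x̂` deleting the last position and the value `x(n)`. -/
def hatf {n : ℕ} (x : Fin (n + 1) → Fin (n + 1)) : Fin n → Fin n :=
  fun i =>
    if h : (x i.castSucc).val < (x (Fin.last n)).val
    then ⟨(x i.castSucc).val, by have h1 := (x (Fin.last n)).isLt; omega⟩
    else ⟨(x i.castSucc).val - 1, by have h1 := (x i.castSucc).isLt; have h2 := i.isLt; omega⟩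

/-- `lam n f k` is `λ_k` of the permutation of `[n]` with one-line notation `f(1), …, f(n)`
(one-indexed): `λ_{n-1}(x) = n - x(n)` and `λ_k(x) = λ_k(x̄)` for `k ≤ n - 2`, where
`x̄ ∈ S_{n-1}` is the restriction of `u⁻¹·x` (`u = s_{x(n)} ⋯ s_{n-1}`), concretely
`x̄(i) = x(i)` if `x(i) < x(n)` and `x̄(i) = x(i) - 1` if `x(i) > x(n)`. -/
def lam : ℕ → (ℕ → ℕ) → ℕ → ℕ
  | 0, _, _ => 0
  | n + 1, f, k =>
    if k = n then (n + 1) - f (n + 1)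
    else lam n (fun i => if f i < f (n + 1) then f i else f i - 1) k

/-- The one-line notation of `x`, as a one-indexed function `ℕ → ℕ`. -/
def oneline {n : ℕ} (x : Fin n → Fin n) : ℕ → ℕ :=
  fun i => if h : i - 1 < n then (x ⟨i - 1, h⟩).val + 1 else 0

/-- `y` contains the pattern `σ`. -/
def ContainsPattern {n m : ℕ} (y : Equiv.Perm (Fin n)) (σ : Equiv.Perm (Fin m)) : Prop :=
  ∃ f : Fin m → Fin n, StrictMono f ∧ ∀ j k, y (f j) < y (f k) ↔ σ j < σ k

/-- `x` is an AR (Arndt–Riehl) permutation: `x⁻¹(i) ≤ i + 1` for all `i ∈ [n]`. -/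
def IsAR {n : ℕ} (x : Equiv.Perm (Fin n)) : Prop :=
  ∀ i : Fin n, (x.symm i).val ≤ i.val + 1

/-!
Reachability `x ⊵_R y` amounts to: every value in `(y i, x i]` sits in `y` at a position after `i`
(for the converse take `b = max x y`). The vector `λ(x)` is the inversion table
`k ↦ #{j < k | x k < x j}`. Deleting the last entry and standardizing (`hatf`) preserves the
reachability condition and the rest of the inversion table, so by induction a reachability step
can only lower the inversion table componentwise. Conversely, the inversion table determines the
permutation, and lowering its `k`-th entry by one is a single reachability step: exchange `x k`
with the smallest larger value to its left.
-/

open Finset Equiv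

variable {n : ℕ}

def ReachCond (x y : Fin n → Fin n) : Prop :=
  ∀ i j, y i < y j → y j ≤ x i → i < j

lemma isAOutcome_self {a : Fin n → Fin n} (ha : Function.Injective a) : IsAOutcome a a :=
  ⟨ha, fun _ => ⟨le_rfl, fun _ h h' => absurd (h.trans_lt h') (lt_irrefl _)⟩⟩

lemma IsBOutcome.eq_of_isAOutcome {a b o x : Fin n → Fin n} (ho : IsBOutcome a b o)
    (hx : IsAOutcome a x) : o = x := by
  by_contra hne
  obtain ⟨i, hi, hmin⟩ := WellFounded.has_min wellFounded_lt {i | o i ≠ x i}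
    (Function.ne_iff.mp hne)
  have hagree : ∀ j < i, o j = x j := fun j hj => not_not.mp fun h => hmin j h hj
  rcases lt_or_gt_of_ne hi with hlt | hgt
  · obtain ⟨j, hji, hxj⟩ := (hx.2 i).2 (o i) (ho.2 i).1 hlt
    exact hji.ne (ho.1 ((hagree j hji).trans hxj))
  · obtain ⟨j, hji, hoj⟩ := (ho.2 i).2.2 (x i) (hx.2 i).1 hgt
    exact hji.ne (hx.1 ((hagree j hji).symm.trans hoj))

lemma isAOutcome_pconj_iff {b y : Fin n → Fin n} :
    IsAOutcome (pconj b) (pconj y) ↔ Function.Injective y ∧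
      ∀ i, y i ≤ b i ∧ ∀ s, y i < s → s ≤ b i → ∃ j, i < j ∧ y j = s := by
  have hinj : Function.Injective (pconj y) ↔ Function.Injective y :=
    ⟨fun h i j hij => Fin.rev_injective (h (by simp [pconj, hij])),
     fun h i j hij => Fin.rev_injective (h (Fin.rev_injective hij))⟩
  refine and_congr hinj ⟨fun h i => ?_, fun h i => ?_⟩
  · obtain ⟨hle, hfree⟩ := h i.rev
    simp only [pconj, Fin.rev_rev, Fin.rev_le_rev] at hle hfree
    refine ⟨hle, fun s hs hsb => ?_⟩
    obtain ⟨j, hj, hjs⟩ := hfree s.rev (Fin.rev_le_rev.mpr hsb) (Fin.rev_lt_rev.mpr hs)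
    exact ⟨j.rev, Fin.lt_rev_iff.mpr hj, Fin.rev_injective hjs⟩
  · obtain ⟨hle, hfree⟩ := h i.rev
    refine ⟨Fin.rev_le_rev.mpr hle, fun s hs hsb => ?_⟩
    obtain ⟨j, hj, hjs⟩ := hfree s.rev (Fin.lt_rev_iff.mp hsb) (Fin.rev_le_iff.mp hs)
    exact ⟨j.rev, Fin.rev_lt_iff.mpr hj, by simp [pconj, hjs]⟩

theorem reaches_iff_reachCond (x y : Perm (Fin n)) : Reaches ⇑x ⇑y ↔ ReachCond ⇑x ⇑y := by
  simp only [Reaches, isAOutcome_pconj_iff]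
  constructor
  · rintro ⟨a, b, ⟨o, ho⟩, hx, -, hyb⟩ i j hij hji
    have hxb : x i ≤ b i := ho.eq_of_isAOutcome hx ▸ (ho.2 i).2.1
    obtain ⟨j', hij', hj'⟩ := (hyb i).2 (y j) hij (hji.trans hxb)
    exact y.injective hj' ▸ hij'
  · intro h
    refine ⟨x, x ⊔ y, ⟨x, x.injective, fun i => ⟨le_rfl, le_sup_left, ?_⟩⟩,
      isAOutcome_self x.injective, y.injective, fun i => ⟨le_sup_right, ?_⟩⟩
    · exact fun s h h' => absurd (h.trans_lt h') (lt_irrefl _)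
    · intro s hs hsb
      have hsx : s ≤ x i := by simpa [hs.not_ge] using hsb
      exact ⟨y.symm s, h i _ (by simpa using hs) (by simpa using hsx), by simp⟩

def invTable (x : Fin n → Fin n) (k : Fin n) : ℕ :=
  #{j | j < k ∧ x k < x j}

lemma invTable_le_val (x : Fin n → Fin n) (k : Fin n) : invTable x k ≤ k :=
  (card_le_card fun _ hj => mem_Iio.mpr (mem_filter.mp hj).2.1).trans_eq (Fin.card_Iio k)

lemma hatf_val (x : Fin (n + 1) → Fin (n + 1)) (i : Fin n) :
    (hatf x i : ℕ) = if (x i.castSucc : ℕ) < x (Fin.last n) then (x i.castSucc : ℕ)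
      else x i.castSucc - 1 := by
  simp only [hatf]; split_ifs <;> rfl

lemma val_castSucc_ne_val_last {x : Fin (n + 1) → Fin (n + 1)} (hx : Function.Injective x)
    (i : Fin n) : (x i.castSucc : ℕ) ≠ x (Fin.last n) :=
  fun h => (Fin.castSucc_lt_last i).ne (hx (Fin.ext h))

lemma hatf_lt_hatf_iff {x : Fin (n + 1) → Fin (n + 1)} (hx : Function.Injective x)
    (i j : Fin n) : hatf x i < hatf x j ↔ x i.castSucc < x j.castSucc := by
  have := val_castSucc_ne_val_last hx i
  have := val_castSucc_ne_val_last hx j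
  rw [Fin.lt_def, Fin.lt_def, hatf_val, hatf_val]
  split_ifs <;> omega

lemma hatf_injective {x : Fin (n + 1) → Fin (n + 1)} (hx : Function.Injective x) :
    Function.Injective (hatf x) := by
  intro i j h
  have hle : ∀ {i j}, hatf x i = hatf x j → x i.castSucc ≤ x j.castSucc := fun h =>
    not_lt.mp fun hlt => (h ▸ (hatf_lt_hatf_iff hx _ _).mpr hlt).false
  exact Fin.castSucc_injective n (hx (le_antisymm (hle h) (hle h.symm)))

lemma invTable_last {x : Fin (n + 1) → Fin (n + 1)} (hx : Function.Injective x) :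
    invTable x (Fin.last n) = n - x (Fin.last n) := by
  calc invTable x (Fin.last n) = #{j | x (Fin.last n) < x j} := by
        refine congrArg card (filter_congr fun j _ => and_iff_right_of_imp fun h => ?_)
        exact Fin.lt_last_iff_ne_last.mpr fun hj => (hj ▸ h).false
    _ = #{v | x (Fin.last n) < v} :=
        card_equiv (.ofBijective x (Finite.injective_iff_bijective.mp hx)) (by simp)
    _ = n - x (Fin.last n) := by simp [filter_lt_eq_Ioi]

lemma invTable_castSucc {x : Fin (n + 1) → Fin (n + 1)} (hx : Function.Injective x)
    (k : Fin n) : invTable x k.castSucc = invTable (hatf x) k := by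
  rw [invTable, invTable, eq_comm, ← card_map Fin.castSuccEmb]
  refine congrArg card (ext fun j => ?_)
  induction j using Fin.lastCases <;>
    simp [hatf_lt_hatf_iff hx, (Fin.castSucc_lt_last _).not_gt]

lemma ReachCond.last_le {x y : Fin (n + 1) → Fin (n + 1)} (hy : Function.Surjective y)
    (h : ReachCond x y) : x (Fin.last n) ≤ y (Fin.last n) := by
  by_contra hlt
  obtain ⟨j, hj⟩ := hy (x (Fin.last n))
  exact (h (Fin.last n) j (hj ▸ not_le.mp hlt) hj.le).not_ge (Fin.le_last j)

lemma ReachCond.hatf {x y : Fin (n + 1) → Fin (n + 1)} (hx : Function.Injective x)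
    (hy : Function.Injective y) (hlast : x (Fin.last n) ≤ y (Fin.last n))
    (h : ReachCond x y) : ReachCond (hatf x) (hatf y) := by
  intro i j hij hji
  have := val_castSucc_ne_val_last hy j
  have := val_castSucc_ne_val_last hx i
  have hlast : (x (Fin.last n) : ℕ) ≤ y (Fin.last n) := hlast
  have hji : (y j.castSucc : ℕ) ≤ x i.castSucc := by
    rw [Fin.le_def, hatf_val, hatf_val] at hji
    split_ifs at hji <;> omega
  exact Fin.castSucc_lt_castSucc_iff.mp
    (h _ _ ((hatf_lt_hatf_iff hy i j).mp hij) (Fin.le_def.mpr hji))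

theorem ReachCond.invTable_le : ∀ {n : ℕ} {x y : Fin n → Fin n}, Function.Injective x →
    Function.Injective y → ReachCond x y → ∀ k, invTable y k ≤ invTable x k
  | 0, _, _, _, _, _, k => k.elim0
  | n + 1, x, y, hx, hy, h, k => by
    have hlast := h.last_le (Finite.injective_iff_surjective.mp hy)
    induction k using Fin.lastCases with
    | last =>
      rw [invTable_last hx, invTable_last hy]
      exact Nat.sub_le_sub_left (Fin.le_def.mp hlast) n
    | cast k =>
      rw [invTable_castSucc hx, invTable_castSucc hy]
      exact (h.hatf hx hy hlast).invTable_le (hatf_injective hx) (hatf_injective hy) k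

lemma oneline_succ (x : Fin n → Fin n) (i : Fin n) : oneline x (i + 1) = x i + 1 := by
  simp [oneline]

lemma oneline_last (x : Fin (n + 1) → Fin (n + 1)) : oneline x (n + 1) = x (Fin.last n) + 1 :=
  oneline_succ x (Fin.last n)

lemma oneline_hatf {x : Fin (n + 1) → Fin (n + 1)} (hx : Function.Injective x) (i : Fin n) :
    oneline (hatf x) (i + 1) = if oneline x (i + 1) < oneline x (n + 1)
      then oneline x (i + 1) else oneline x (i + 1) - 1 := by
  have := val_castSucc_ne_val_last hx i
  rw [oneline_succ, hatf_val, show oneline x (i + 1) = x i.castSucc + 1 from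
    oneline_succ x i.castSucc, oneline_last]
  split_ifs <;> omega

lemma lam_congr : ∀ {m : ℕ} {f g : ℕ → ℕ}, (∀ i : Fin m, f (i + 1) = g (i + 1)) →
    ∀ k, lam m f k = lam m g k
  | 0, _, _, _, _ => rfl
  | m + 1, f, g, h, k => by
    have hlast : f (m + 1) = g (m + 1) := h (Fin.last m)
    simp only [lam, hlast]
    congr 1
    refine lam_congr (fun i => ?_) k
    simp only [← Fin.val_castSucc i, h i.castSucc]

theorem lam_oneline : ∀ {n : ℕ} {x : Fin n → Fin n}, Function.Injective x →
    ∀ k (hk : k < n), lam n (oneline x) k = invTable x ⟨k, hk⟩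
  | 0, _, _, k, hk => absurd hk (Nat.not_lt_zero k)
  | n + 1, x, hx, k, hk => by
    rw [lam]
    split_ifs with hkn
    · subst hkn
      rw [show (⟨k, hk⟩ : Fin (k + 1)) = Fin.last k from rfl, invTable_last hx,
        oneline_last]
      omega
    · rw [lam_congr (g := oneline (hatf x)) (fun i => (oneline_hatf hx i).symm),
        lam_oneline (hatf_injective hx) k (by omega), ← invTable_castSucc hx]
      rfl

theorem invTable_injective : ∀ {n : ℕ} {x y : Fin n → Fin n}, Function.Injective x →
    Function.Injective y → invTable x = invTable y → x = y
  | 0, _, _, _, _, _ => funext fun i => i.elim0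
  | n + 1, x, y, hx, hy, h => by
    have hlast : x (Fin.last n) = y (Fin.last n) := by
      have := congrFun h (Fin.last n)
      rw [invTable_last hx, invTable_last hy] at this
      exact Fin.ext (by omega)
    have hhat : hatf x = hatf y := invTable_injective (hatf_injective hx) (hatf_injective hy)
      (funext fun k => by rw [← invTable_castSucc hx, ← invTable_castSucc hy, h])
    funext i
    induction i using Fin.lastCases with
    | last => exact hlast
    | cast i =>
      have := congrArg Fin.val (congrFun hhat i)
      have := val_castSucc_ne_val_last hx i
      have := val_castSucc_ne_val_last hy i
      rw [hatf_val, hatf_val, hlast] at *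
      exact Fin.ext (by split_ifs at * <;> omega)

section UnitStep

variable {x : Perm (Fin n)} {q k : Fin n}

lemma invTable_mul_swap_of_lt_of_lt {m : Fin n} (hq : q < m) (hk : k < m) :
    invTable ⇑(x * swap q k) m = invTable x m :=
  card_equiv (swap q k) fun j => by
    simp only [mem_filter, mem_univ, true_and, Perm.mul_apply,
      swap_apply_of_ne_of_ne hq.ne' hk.ne', swap_apply_def]
    split_ifs <;> simp_all

lemma lt_or_lt_of_lt_of_ne (hmin : ∀ j < k, x k < x j → x q ≤ x j) {j : Fin n}
    (hjk : j < k) (hjq : j ≠ q) : x j < x k ∨ x q < x j := by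
  refine (lt_or_gt_of_ne (x.injective.ne hjk.ne)).imp_right fun h => ?_
  exact (hmin j hjk h).lt_of_ne (x.injective.ne hjq.symm)

lemma reachCond_mul_swap (hqk : q < k) (hxq : x k < x q)
    (hmin : ∀ j < k, x k < x j → x q ≤ x j) : ReachCond x ⇑(x * swap q k) := by
  intro i j hij hji
  simp only [Perm.mul_apply] at hij hji
  rcases eq_or_ne i k with rfl | hik
  · rw [swap_apply_right] at hij
    exact absurd (hij.trans_le hji) hxq.not_gt
  rcases eq_or_ne i q with rfl | hiq
  · rw [swap_apply_left] at hij
    by_contra hji'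
    have hjk : j < k := (not_lt.mp hji').trans_lt hqk
    have hjq : j ≠ i := by rintro rfl; simp at hij
    rw [swap_apply_of_ne_of_ne hjq hjk.ne] at hij hji
    exact hjq (x.injective (le_antisymm hji (hmin j hjk hij)))
  · rw [swap_apply_of_ne_of_ne hiq hik] at hij
    exact absurd (hij.trans_le hji) (lt_irrefl _)

lemma apply_swap_lt_apply_swap_iff (hxq : x k < x q) (hmin : ∀ j < k, x k < x j → x q ≤ x j)
    {a b : Fin n} (ha : a < k) (hb : b < k) :
    x (swap q k a) < x (swap q k b) ↔ x a < x b := by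
  rcases eq_or_ne a q with haq | haq <;> rcases eq_or_ne b q with hbq | hbq
  · simp [haq, hbq]
  · rw [haq, swap_apply_left, swap_apply_of_ne_of_ne hbq hb.ne]
    have := lt_or_lt_of_lt_of_ne hmin hb hbq
    grind
  · rw [hbq, swap_apply_left, swap_apply_of_ne_of_ne haq ha.ne]
    have := lt_or_lt_of_lt_of_ne hmin ha haq
    grind
  · rw [swap_apply_of_ne_of_ne haq ha.ne, swap_apply_of_ne_of_ne hbq hb.ne]

lemma invTable_mul_swap_of_lt (hxq : x k < x q) (hmin : ∀ j < k, x k < x j → x q ≤ x j)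
    {m : Fin n} (hm : m < k) : invTable ⇑(x * swap q k) m = invTable x m :=
  congrArg card <| filter_congr fun _ _ => and_congr_right fun hj =>
    apply_swap_lt_apply_swap_iff hxq hmin hm (hj.trans hm)

lemma invTable_mul_swap_self (hqk : q < k) (hxq : x k < x q)
    (hmin : ∀ j < k, x k < x j → x q ≤ x j) :
    invTable ⇑(x * swap q k) k = invTable x k - 1 := by
  rw [invTable, invTable, ← card_erase_of_mem (s := {j | j < k ∧ x k < x j}) (a := q)
    (by simp [hqk, hxq])]
  refine congrArg card (ext fun j => ?_)
  rcases eq_or_ne j q with rfl | hjq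
  · simp [hxq.not_gt]
  · simp only [mem_erase, mem_filter, mem_univ, true_and, Perm.mul_apply, swap_apply_right,
      ne_eq, hjq, not_false_eq_true]
    refine and_congr_right fun hjk => ?_
    rw [swap_apply_of_ne_of_ne hjq hjk.ne]
    have := lt_or_lt_of_lt_of_ne hmin hjk hjq
    grind

end UnitStep

theorem exists_reachCond_invTable_eq_update (x : Perm (Fin n)) {k : Fin n}
    (hk : 0 < invTable x k) : ∃ x' : Perm (Fin n),
      ReachCond x x' ∧ invTable x' = Function.update (invTable x) k (invTable x k - 1) := by
  obtain ⟨q, hq, hmin⟩ := exists_min_image {j | j < k ∧ x k < x j} x (card_pos.mp hk)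
  simp only [mem_filter, mem_univ, true_and, and_imp] at hq hmin
  refine ⟨x * swap q k, reachCond_mul_swap hq.1 hq.2 hmin, funext fun m => ?_⟩
  rcases lt_trichotomy m k with hm | rfl | hm
  · rw [Function.update_of_ne hm.ne, invTable_mul_swap_of_lt hq.2 hmin hm]
  · rw [Function.update_self, invTable_mul_swap_self hq.1 hq.2 hmin]
  · rw [Function.update_of_ne hm.ne', invTable_mul_swap_of_lt_of_lt (hq.1.trans hm) hm]

theorem reflTransGen_reachCond_of_invTable_le {x y : Perm (Fin n)}
    (h : ∀ k, invTable y k ≤ invTable x k) :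
    Relation.ReflTransGen (fun u v : Perm (Fin n) => ReachCond u v) x y := by
  by_cases heq : invTable x = invTable y
  · obtain rfl : x = y := DFunLike.coe_injective (invTable_injective x.injective y.injective heq)
    exact .refl
  obtain ⟨k, hk⟩ : ∃ k, invTable y k < invTable x k := by
    by_contra! hge
    exact heq (funext fun k => le_antisymm (hge k) (h k))
  obtain ⟨x', hstep, hx'⟩ := exists_reachCond_invTable_eq_update x (Nat.zero_lt_of_lt hk)
  have hdecr : ∑ j, invTable x' j < ∑ j, invTable x j :=
    Fintype.sum_strictMono (hx' ▸ update_lt_self_iff.mpr (by omega))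
  have hle : invTable y ≤ invTable x' := hx' ▸ le_update_iff.mpr ⟨by omega, fun j _ => h j⟩
  exact .head hstep (reflTransGen_reachCond_of_invTable_le hle)
termination_by ∑ j, invTable x j

theorem pseudoGE_iff_invTable_le (x y : Perm (Fin n)) :
    PseudoGE x y ↔ ∀ k, invTable y k ≤ invTable x k := by
  have hrel : (fun u v : Perm (Fin n) => Reaches u v) =
      fun u v : Perm (Fin n) => ReachCond u v := by
    ext u v; exact reaches_iff_reachCond u v
  rw [PseudoGE, hrel]
  refine ⟨fun h => ?_, reflTransGen_reachCond_of_invTable_le⟩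
  induction h with
  | refl => exact fun k => le_rfl
  | tail _ hstep ih =>
    exact fun k => (hstep.invTable_le (Equiv.injective _) (Equiv.injective _) k).trans (ih k)

/-- Theorem `thm:same`. The pseudoreachability order coincides with
the bubble-sorting order: `x ≥_P y` iff `λ_k(x) ≥ λ_k(y)` for all `k ∈ [n-1]`. -/
theorem stmt14 {n : ℕ} (x y : Equiv.Perm (Fin n)) :
    PseudoGE x y ↔
      ∀ k, 1 ≤ k → k ≤ n - 1 → lam n (oneline ⇑y) k ≤ lam n (oneline ⇑x) k := by
  rw [pseudoGE_iff_invTable_le]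
  refine ⟨fun h k _ hk => ?_, fun h k => ?_⟩
  · have hkn : k < n := by omega
    rw [lam_oneline y.injective k hkn, lam_oneline x.injective k hkn]
    exact h _
  · rcases Nat.eq_zero_or_pos k with hk | hk
    · exact ((invTable_le_val y k).trans hk.le).trans (Nat.zero_le _)
    · have := h k hk (by omega)
      rwa [lam_oneline y.injective k k.isLt, lam_oneline x.injective k k.isLt] at this
end

section
/- For a permutation x of [n], the following are equivalent: (1) x^{-1}(i) ≤ i + 1 for all i ∈ [n]; (2) #{k ∈ [j] : x(k) ≥ j} = 1 for all j ∈ [n]; (3) x avoids both of the patterns 231 and 321; (4) x = s_{i_1} s_{i_2} ⋯ s_{i_k} for some strictly decreasing sequence n − 1 ≥ i_1 > i_2 > ⋯ > i_k ≥ 1 (possibly the empty product, giving the identity). -/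
/-!
Condition (1) says `x k + 1 ≥ k` for every position `k`. For any permutation,
`#{k ≤ j | x k ≥ j} = #{k > j | x k < j} + 1`, so (2) says that no value smaller than `j`
sits to the right of `j`, which is (1) again. A violation `x c < j < c` of this makes the first
count at least two, giving positions `a < b ≤ j` with `x a, x b > x c`: a `231` or a `321`;
conversely such a pattern at `a < b < c` makes the count at `j = b` at least two.
Multiplying on the left by `s_m` preserves (1) when every point `≥ m` is fixed. An AR permutation
whose largest moved point is `m` maps `m` to `m - 1`, so `s_m x` fixes `m`, and peeling off
generators in decreasing order gives (4); the same step read backwards gives (4) → (1).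
-/

open Finset Equiv

section ARPermutations

variable {n : ℕ}

lemma isAR_iff_le_apply_add_one {x : Perm (Fin n)} :
    IsAR x ↔ ∀ k : Fin n, (k : ℕ) ≤ x k + 1 :=
  ⟨fun h k => by simpa using h (x k), fun h i => by simpa using h (x.symm i)⟩

lemma isAR_iff_forall_lt_le_apply {x : Perm (Fin n)} :
    IsAR x ↔ ∀ j k : Fin n, j < k → j ≤ x k := by
  rw [isAR_iff_le_apply_add_one]
  refine ⟨fun h j k hjk => ?_, fun h k => ?_⟩
  · have := h k
    rw [Fin.lt_def] at hjk
    rw [Fin.le_def]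
    omega
  · rcases k with ⟨_ | k, hk⟩
    · simp
    · have := h ⟨k, by omega⟩ ⟨k + 1, hk⟩ (by simp [Fin.lt_def])
      rw [Fin.le_def] at this
      simpa using this

lemma card_filter_apply_lt (x : Perm (Fin n)) (j : Fin n) : #{k | x k < j} = j := by
  have : ({k | x k < j} : Finset (Fin n)) = (Iio j).map x.symm.toEmbedding := by
    ext k
    simp
  simp [this]

lemma card_filter_le_and_le_apply (x : Perm (Fin n)) (j : Fin n) :
    #{k | k ≤ j ∧ j ≤ x k} = #{k | j < k ∧ x k < j} + 1 := by
  set A : Finset (Fin n) := {k | k ≤ j}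
  set B : Finset (Fin n) := {k | x k < j}
  have hA : #A = j + 1 := by simp [A, filter_ge_eq_Iic]
  have hB : #B = j := card_filter_apply_lt x j
  have hAB : A \ B = ({k | k ≤ j ∧ j ≤ x k} : Finset (Fin n)) := by ext k; simp [A, B]
  have hBA : B \ A = ({k | j < k ∧ x k < j} : Finset (Fin n)) := by ext k; simp [A, B, and_comm]
  have h1 := card_sdiff_add_card_inter A B
  have h2 := card_sdiff_add_card_inter B A
  rw [hAB] at h1
  rw [hBA, inter_comm] at h2
  omega

lemma isAR_iff_card_filter_eq_one {x : Perm (Fin n)} :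
    IsAR x ↔ ∀ j : Fin n, #{k | k ≤ j ∧ j ≤ x k} = 1 := by
  simp [card_filter_le_and_le_apply, filter_eq_empty_iff, isAR_iff_forall_lt_le_apply]

lemma not_containsPattern_of_isAR {x : Perm (Fin n)} (hx : IsAR x) {σ : Perm (Fin 3)}
    (h0 : σ 2 < σ 0) (h1 : σ 2 < σ 1) : ¬ ContainsPattern x σ := by
  rintro ⟨f, hf, hxf⟩
  have hle : f 1 ≤ x (f 2) := isAR_iff_forall_lt_le_apply.mp hx _ _ (hf (by decide))
  have hcard := (isAR_iff_card_filter_eq_one.mp hx (f 1)).le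
  refine (hf (show (0 : Fin 3) < 1 by decide)).ne (card_le_one.mp hcard _ ?_ _ ?_)
  · simpa using ⟨(hf (by decide)).le, hle.trans ((hxf 2 0).mpr h0).le⟩
  · simpa using hle.trans ((hxf 2 1).mpr h1).le

lemma exists_lt_lt_of_not_isAR {x : Perm (Fin n)} (hx : ¬ IsAR x) :
    ∃ a b c : Fin n, a < b ∧ b < c ∧ x c < x a ∧ x c < x b := by
  obtain ⟨j, c, hjc, hcj⟩ : ∃ j c : Fin n, j < c ∧ x c < j := by
    simpa [isAR_iff_forall_lt_le_apply] using hx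
  have hcard : 1 < #{k | k ≤ j ∧ j ≤ x k} := by
    have : 0 < #{k | j < k ∧ x k < j} := card_pos.mpr ⟨c, by simp [hjc, hcj]⟩
    rw [card_filter_le_and_le_apply]
    omega
  obtain ⟨a, ha, b, hb, hab⟩ := one_lt_card.mp hcard
  simp only [mem_filter, mem_univ, true_and] at ha hb
  rcases hab.lt_or_gt with hab | hba
  · exact ⟨a, b, c, hab, hb.1.trans_lt hjc, hcj.trans_le ha.2, hcj.trans_le hb.2⟩
  · exact ⟨b, a, c, hba, ha.1.trans_lt hjc, hcj.trans_le hb.2, hcj.trans_le ha.2⟩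

lemma containsPattern_231_or_321 {x : Perm (Fin n)} {a b c : Fin n} (hab : a < b) (hbc : b < c)
    (hca : x c < x a) (hcb : x c < x b) :
    ContainsPattern x (swap 0 1 * swap 1 2 : Perm (Fin 3)) ∨
      ContainsPattern x (swap 0 2 : Perm (Fin 3)) := by
  have hf : StrictMono ![a, b, c] :=
    Fin.strictMono_iff_lt_succ.mpr (by simp [Fin.forall_fin_two, hab, hbc])
  rcases lt_or_gt_of_ne (x.injective.ne hab.ne) with hab' | hba'
  · refine Or.inl ⟨_, hf, fun j k => ?_⟩
    fin_cases j <;> fin_cases k <;>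
      simp (config := { decide := true }) [hca, hcb, hab', hca.le, hcb.le, hab'.le]
  · refine Or.inr ⟨_, hf, fun j k => ?_⟩
    fin_cases j <;> fin_cases k <;>
      simp (config := { decide := true }) [hca, hcb, hba', hca.le, hcb.le, hba'.le]

lemma sgen_mul_self (i : ℕ) : sgen n i * sgen n i = 1 := by
  unfold sgen
  split_ifs <;> simp

lemma sgen_apply_of_lt {i : ℕ} {p : Fin n} (h : i < p) : sgen n i p = p := by
  unfold sgen
  split_ifs
  · exact swap_apply_of_ne_of_ne (Fin.ne_of_val_ne (by simp; omega))
      (Fin.ne_of_val_ne (by simp; omega))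
  · rfl

lemma prod_map_sgen_apply_of_forall_lt {l : List ℕ} {p : Fin n} (h : ∀ i ∈ l, i < p) :
    (l.map (sgen n)).prod p = p := by
  induction l with
  | nil => rfl
  | cons i l ih => simp_all [Perm.mul_apply, sgen_apply_of_lt]

lemma isAR_sgen_mul_iff {m : ℕ} (hm : 1 ≤ m) (hmn : m < n) {y : Perm (Fin n)}
    (hy : ∀ p : Fin n, m ≤ p → y p = p) : IsAR (sgen n m * y) ↔ IsAR y := by
  simp only [isAR_iff_le_apply_add_one]
  refine forall_congr' fun k => ?_
  rw [Perm.mul_apply, sgen, dif_pos ⟨hm, hmn⟩, swap_apply_def]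
  rcases lt_or_ge (k : ℕ) m with hk | hk
  · split_ifs <;> simp only [Fin.ext_iff] at * <;> omega
  · have hyk := congrArg Fin.val (hy k hk)
    split_ifs <;> simp only [Fin.ext_iff] at * <;> omega

lemma isAR_prod_map_sgen {l : List ℕ} (hl : l.Pairwise (· > ·))
    (hb : ∀ i ∈ l, 1 ≤ i ∧ i ≤ n - 1) : IsAR (l.map (sgen n)).prod := by
  induction l with
  | nil => simp [isAR_iff_le_apply_add_one]
  | cons i l ih =>
    rw [List.pairwise_cons] at hl
    obtain ⟨hi, hin⟩ := hb i List.mem_cons_self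
    have hfix : ∀ p : Fin n, i ≤ p → (l.map (sgen n)).prod p = p := fun p hp =>
      prod_map_sgen_apply_of_forall_lt fun j hj => (hl.1 j hj).trans_le hp
    rw [List.map_cons, List.prod_cons, isAR_sgen_mul_iff hi (by omega) hfix]
    exact ih hl.2 fun j hj => hb j (List.mem_cons_of_mem i hj)

lemma apply_add_one_eq_of_isAR {x : Perm (Fin n)} (hx : IsAR x) {q : Fin n}
    (hfix : ∀ p : Fin n, q < p → x p = p) (hq : x q ≠ q) : (x q : ℕ) + 1 = q := by
  have hle : (q : ℕ) ≤ x q + 1 := isAR_iff_le_apply_add_one.mp hx q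
  have hlt : x q < q := (lt_or_gt_of_ne hq).resolve_right fun h =>
    hq (x.injective (hfix _ h))
  rw [Fin.lt_def] at hlt
  omega

lemma exists_prod_map_sgen_of_isAR (m : ℕ) (hm : m ≤ n) {x : Perm (Fin n)} (hx : IsAR x)
    (hfix : ∀ p : Fin n, m ≤ p → x p = p) :
    ∃ l : List ℕ, l.IsChain (· > ·) ∧ (∀ i ∈ l, 1 ≤ i ∧ i < m) ∧
      x = (l.map (sgen n)).prod := by
  induction m generalizing x with
  | zero =>
    refine ⟨[], List.isChain_nil, by simp, ?_⟩
    ext p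
    simp [hfix p (Nat.zero_le _)]
  | succ m ih =>
    set q : Fin n := ⟨m, by omega⟩
    by_cases hq : x q = q
    · have hfix' : ∀ p : Fin n, m ≤ p → x p = p := fun p hp =>
        (eq_or_lt_of_le hp).elim (fun h => by rw [show p = q from Fin.ext h.symm, hq])
          fun h => hfix p h
      obtain ⟨l, hc, hb, hl⟩ := ih (by omega) hx hfix'
      exact ⟨l, hc, fun i hi => ⟨(hb i hi).1, by have := (hb i hi).2; omega⟩, hl⟩
    -- `x m = m - 1`, so `y = s_m * x` also fixes `m` and we recurse on `y`.
    have hxq : (x q : ℕ) + 1 = m := apply_add_one_eq_of_isAR hx hfix hq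
    set y := sgen n m * x
    have hxy : sgen n m * y = x := by rw [← mul_assoc, sgen_mul_self, one_mul]
    have hyfix : ∀ p : Fin n, m ≤ p → y p = p := by
      intro p hp
      rcases eq_or_lt_of_le hp with h | h
      · obtain rfl : p = q := Fin.ext h.symm
        rw [Perm.mul_apply, sgen, dif_pos ⟨by omega, by omega⟩,
          show x q = ⟨m - 1, by omega⟩ from Fin.ext (by simp only; omega)]
        exact swap_apply_left _ _
      · rw [Perm.mul_apply, hfix p h, sgen_apply_of_lt h]
    have hy : IsAR y := (isAR_sgen_mul_iff (by omega) (by omega) hyfix).mp (hxy ▸ hx)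
    obtain ⟨l, hc, hb, hl⟩ := ih (by omega) hy hyfix
    refine ⟨m :: l,
      List.isChain_cons.mpr ⟨fun j hj => (hb j (List.mem_of_mem_head? hj)).2, hc⟩,
      fun i hi => ?_, by rw [List.map_cons, List.prod_cons, ← hl, hxy]⟩
    rcases List.mem_cons.mp hi with rfl | hi
    · omega
    · exact ⟨(hb i hi).1, by have := (hb i hi).2; omega⟩

lemma isAR_iff_exists_prod_map_sgen {x : Perm (Fin n)} :
    IsAR x ↔ ∃ l : List ℕ, l.IsChain (· > ·) ∧ (∀ i ∈ l, 1 ≤ i ∧ i ≤ n - 1) ∧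
      x = (l.map (sgen n)).prod := by
  refine ⟨fun hx => ?_, ?_⟩
  · obtain ⟨l, hc, hb, hl⟩ :=
      exists_prod_map_sgen_of_isAR n le_rfl hx fun p hp => absurd p.isLt (not_lt.mpr hp)
    exact ⟨l, hc, fun i hi => ⟨(hb i hi).1, by have := (hb i hi).2; omega⟩, hl⟩
  · rintro ⟨l, hc, hb, rfl⟩
    exact isAR_prod_map_sgen (List.isChain_iff_pairwise.mp hc) hb

end ARPermutations

-- `swap 0 1 * swap 1 2` and `swap 0 2` have one-line notations `231` and `321`.
/-- Lemma `lem:x1`. For `x ∈ S_n` the following are equivalent: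
(1) `x⁻¹(i) ≤ i + 1` for all `i`; (2) `#{k ∈ [j] : x(k) ≥ j} = 1` for all `j`;
(3) `x` avoids both `231` and `321`; (4) `x = s_{i₁} ⋯ s_{i_k}` with
`n - 1 ≥ i₁ > ⋯ > i_k ≥ 1`. (Here `Equiv.swap 0 1 * Equiv.swap 1 2` has one-line
notation `231` and `Equiv.swap 0 2` has one-line notation `321`.) -/
theorem stmt16 {n : ℕ} (x : Equiv.Perm (Fin n)) :
    [(∀ i : Fin n, (x.symm i).val ≤ i.val + 1),
     (∀ j : Fin n, (Finset.univ.filter (fun k : Fin n => k ≤ j ∧ j ≤ x k)).card = 1),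
     (¬ ContainsPattern x (Equiv.swap 0 1 * Equiv.swap 1 2 : Equiv.Perm (Fin 3)) ∧
       ¬ ContainsPattern x (Equiv.swap 0 2 : Equiv.Perm (Fin 3))),
     (∃ l : List ℕ, l.Chain' (· > ·) ∧ (∀ i ∈ l, 1 ≤ i ∧ i ≤ n - 1) ∧
       x = (l.map (sgen n)).prod)].TFAE := by
  tfae_have 1 ↔ 2 := isAR_iff_card_filter_eq_one
  tfae_have 1 → 3 := fun hx =>
    ⟨not_containsPattern_of_isAR hx (by decide) (by decide),
      not_containsPattern_of_isAR hx (by decide) (by decide)⟩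
  tfae_have 3 → 1 := by
    rintro ⟨h231, h321⟩
    by_contra hx
    obtain ⟨a, b, c, hab, hbc, hca, hcb⟩ := exists_lt_lt_of_not_isAR hx
    exact (containsPattern_231_or_321 hab hbc hca hcb).elim h231 h321
  tfae_have 1 ↔ 4 := isAR_iff_exists_prod_map_sgen
  tfae_finish
end

section
/- If x is an AR permutation of [n] and y ≤_B x in the Bruhat order, then y is also an AR permutation. -/
/-!
Among the first `p + 1` positions of a permutation `x` of `Fin n` at most `p` carry a value
below `p`, and exactly `p` do unless some `v < p` sits at a position `x⁻¹ v > p`. Hence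
`bcount x p p = 1 + #{v < p | x⁻¹ v > p}`, and `x` is AR exactly when all these diagonal
counts equal `1`. Going down in the Bruhat order can only decrease them.
-/

open Finset

section

variable {n : ℕ} (x : Equiv.Perm (Fin n))

theorem bcount_diag_eq (p : Fin n) :
    bcount x p p = #{v ∈ Iio p | p < x.symm v} + 1 := by
  have hpositions : #{k | k ≤ p ∧ x k < p} + bcount x p p = p + 1 := by
    rw [← Fin.card_Iic, ← card_filter_add_card_filter_not (s := Iic p) (fun k => x k < p), bcount]
    simp only [not_lt]
    congr 2 <;> ext k <;> simp
  have hlow : #{k | k ≤ p ∧ x k < p} = #{v ∈ Iio p | x.symm v ≤ p} := by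
    refine card_nbij' x x.symm ?_ ?_ ?_ ?_ <;> intro a ha <;> simp_all
  have hvalues : #{v ∈ Iio p | x.symm v ≤ p} + #{v ∈ Iio p | p < x.symm v} = p := by
    simpa only [not_le, Fin.card_Iio] using
      card_filter_add_card_filter_not (s := Iio p) (fun v => x.symm v ≤ p)
  omega

theorem bcount_diag_le_one_iff (p : Fin n) :
    bcount x p p ≤ 1 ↔ ∀ v < p, x.symm v ≤ p := by
  simp [bcount_diag_eq, filter_eq_empty_iff]

theorem isAR_iff_forall_lt_imp_symm_le :
    IsAR x ↔ ∀ p v : Fin n, v < p → x.symm v ≤ p := by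
  refine ⟨fun hx p v hvp => ?_, fun hx v => ?_⟩
  · have := hx v
    rw [Fin.le_def]
    omega
  · by_cases hv : v.val + 1 < n
    · exact Fin.le_def.1 (hx ⟨v + 1, hv⟩ v (Fin.lt_def.2 (Nat.lt_succ_self v)))
    · have := (x.symm v).isLt
      omega

theorem isAR_iff_bcount_diag_le_one : IsAR x ↔ ∀ p, bcount x p p ≤ 1 := by
  simp only [isAR_iff_forall_lt_imp_symm_le, bcount_diag_le_one_iff]

end

/-- Corollary `cor:arn-bru`. If `x` is an AR permutation and
`y ≤_B x`, then `y` is an AR permutation. -/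
theorem stmt17 {n : ℕ} (x y : Equiv.Perm (Fin n)) (hx : IsAR x) (h : BruhatGE x y) :
    IsAR y := by
  rw [isAR_iff_bcount_diag_le_one] at hx ⊢
  exact fun p => (h p p).trans (hx p)
end

section
/- Let x be an AR permutation of [n], let k ∈ [n] be an exceedance of x (i.e., x(k) > k), and set i = x(k). Then x(j) = j − 1 for all j with k + 1 ≤ j ≤ i. -/
/-! The AR condition pins `x(j) ≥ j - 1` directly. For the other inequality, the `j + 1`
values `x(k)` and `0, …, j - 1` all have preimages in `[0, j]` under an AR permutation;
if `x(j) ≥ j` none of them is `j`, which pigeonholes `j + 1` preimages into `[0, j)`. -/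

namespace IsAR

variable {n : ℕ} {x : Equiv.Perm (Fin n)}

lemma le_apply_add_one (hx : IsAR x) (j : Fin n) : j.val ≤ (x j).val + 1 := by
  simpa using hx (x j)

lemma symm_lt_of_lt (hx : IsAR x) {w j : Fin n} (hwj : w < j) (hw : w ≠ x j) :
    x.symm w < j := by
  have hle : (x.symm w).val ≤ j.val := (hx w).trans (Fin.lt_def.mp hwj)
  have hne : x.symm w ≠ j := fun h => hw (by rw [← h, Equiv.apply_symm_apply])
  exact lt_of_le_of_ne (Fin.le_def.mpr hle) hne

lemma apply_lt_of_lt_of_le (hx : IsAR x) {k j : Fin n} (hkj : k < j) (hjx : j ≤ x k) :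
    x j < j := by
  by_contra! hjle
  have hmaps : Set.MapsTo x.symm ↑(insert (x k) (Finset.Iio j)) ↑(Finset.Iio j) := by
    intro w hw
    rcases Finset.mem_insert.mp (Finset.mem_coe.mp hw) with rfl | hw
    · simpa using hkj
    · have hwj := Finset.mem_Iio.mp hw
      exact Finset.mem_Iio.mpr (hx.symm_lt_of_lt hwj (hwj.trans_le hjle).ne)
  have hcard := Finset.card_le_card_of_injOn x.symm hmaps x.symm.injective.injOn
  rw [Finset.card_insert_of_notMem (by simpa using hjx), Fin.card_Iio] at hcard
  omega

end IsAR

theorem stmt18_general {n : ℕ} (x : Equiv.Perm (Fin n)) (hx : IsAR x) (k : Fin n) :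
    ∀ j : Fin n, k < j → j ≤ x k → (x j).val + 1 = j.val := by
  intro j hkj hjx
  have hlt := Fin.lt_def.mp (hx.apply_lt_of_lt_of_le hkj hjx)
  have hle := hx.le_apply_add_one j
  omega

/-- Lemma `lem:x2`. If `x` is an AR permutation and `k` is an
exceedance of `x` (`x(k) > k`), then `x(j) = j - 1` for all `k + 1 ≤ j ≤ x(k)`. -/
theorem stmt18 {n : ℕ} (x : Equiv.Perm (Fin n)) (hx : IsAR x) (k : Fin n)
    (hk : k < x k) :
    ∀ j : Fin n, k < j → j ≤ x k → (x j).val + 1 = j.val :=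
  stmt18_general x hx k
end
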